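/- Set E := ℰ + (n/2)·id and 𝗌 := Σ − (n/2)·id. As operators on W the following relations hold (brackets denote commutators AB − BA, braces denote anticommutators AB + BA): [E,R] = 2R, [E,T] = −2T, [T,R] = 4E, and 𝗌 commutes with R, E, T; [R,δ] = −2Q, [R,Q*] = −2δ*, [R,Q] = 0, [R,δ*] = 0; [T,δ*] = 2Q*, [T,Q] = 2δ, [T,δ] = 0, [T,Q*] = 0; [E,δ] = −δ, [E,δ*] = δ*, [E,Q] = Q, [E,Q*] = −Q*; [𝗌,δ] = δ, [𝗌,δ*] = −δ*, [𝗌,Q] = Q, [𝗌,Q*] = −Q*; δ² = (δ*)² = Q² = (Q*)² = 0, {δ,δ*} = E + 𝗌, {Q,Q*} = E − 𝗌, {δ,Q*} = T, {δ*,Q} = R, {δ,Q} = 0, {δ*,Q*} = 0. (These are the defining relations of the orthosymplectic Lie superalgebra spo(2|1,1) realized by the eight fiberwise operators R, E, T, 𝗌, Q, δ, δ*, Q*.) -/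

import Mathlib

/-!
The eight operators are quadratic in the generators `p_i`, `∂_{p_i}` of a Weyl algebra
(`[∂_{p_i}, p_j] = δ_ij`) and `ξ^i`, `∂_{ξ^i}` of a Clifford algebra
(`{∂_{ξ^i}, ξ^j} = δ_ij`), the even generators commuting with the odd ones, and every relation
follows from these canonical relations.

* `ad ℰ` and `ad Σ` are derivations acting on `p_i, ∂_{p_i}, ξ^i, ∂_{ξ^i}` with the weights
  `(1,0), (-1,0), (0,1), (0,-1)`, so each quadratic operator is a joint eigenvector whose weight
  is the sum of the weights of its factors. This gives all brackets with `E` and `𝗌`.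
* For odd `x, y` and even `u, v` with `[u, y] = [x, v] = 0`,
  `{x u, y v} = {x, y} v u + x y [u, v]`; this computes all anticommutators of `δ, δ*, Q, Q*`,
  including the squares.
* `R = {δ*, Q}` and `T = {δ, Q*}`, so the super Jacobi identity
  `[{A, B}, C] = [A, {B, C}] + [B, {A, C}]` expresses the nonzero brackets of `R` and `T` with
  the odd operators through anticommutators and weights; the vanishing ones hold because each
  factor of `R` (resp. `T`) commutes with each factor of `Q`, `δ*` (resp. `δ`, `Q*`).
-/

open MvPolynomial Finset

namespace SpinQuant

noncomputable section

/-- Diagonal entries of the signature-`(p,q)` bilinear form `η` on `ℝⁿ`, `n = p + q`: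
`+1` for the first `p` indices and `-1` for the last `q` ones.  Since `η` is diagonal
and equal to its inverse, these are simultaneously the `η_{ii}` and the `η^{ii}`. -/
def eta (p q : ℕ) (i : Fin (p + q)) : ℝ := if (i : ℕ) < p then 1 else -1

/-- The supercommutative algebra `W = ℝ[p₁,…,pₙ] ⊗ Λ(ξ¹,…,ξⁿ)`, modeled as families of
polynomials in the even variables `p_i`, indexed by the subsets of `Fin n` recording the
monomials in the odd variables `ξ^i` (a subset `S` stands for the exterior monomial
`ξ^{i₁} ∧ ⋯ ∧ ξ^{iκ}` with `i₁ < ⋯ < iκ` the elements of `S`). -/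
abbrev W (p q : ℕ) := Finset (Fin (p + q)) → MvPolynomial (Fin (p + q)) ℝ

/-- Koszul sign of moving `ξ^i` through the monomial `ξ^S`. -/
def sgn (p q : ℕ) (i : Fin (p + q)) (S : Finset (Fin (p + q))) : ℝ :=
  (-1) ^ (S.filter (fun j => j < i)).card

/-- Multiplication by the even variable `p_i`. -/
def pMul (p q : ℕ) (i : Fin (p + q)) : Module.End ℝ (W p q) where
  toFun f S := X i * f S
  map_add' f g := by funext S; simp [mul_add]
  map_smul' c f := by funext S; simp [mul_smul_comm]

/-- The partial derivative `∂/∂p_i`. -/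
def pD (p q : ℕ) (i : Fin (p + q)) : Module.End ℝ (W p q) where
  toFun f S := pderiv i (f S)
  map_add' f g := by funext S; simp
  map_smul' c f := by funext S; simp

/-- Exterior multiplication by the odd variable `ξ^i`. -/
def xiMul (p q : ℕ) (i : Fin (p + q)) : Module.End ℝ (W p q) where
  toFun f S := if i ∈ S then sgn p q i S • f (S.erase i) else 0
  map_add' f g := by funext S; by_cases h : i ∈ S <;> simp [h, smul_add]
  map_smul' c f := by funext S; by_cases h : i ∈ S <;> simp [h, smul_smul, mul_comm]

/-- The odd superderivation `∂/∂ξ^i`, determined by `∂_{ξ^i}(ξ^j) = δ_i^j`. -/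
def xiD (p q : ℕ) (i : Fin (p + q)) : Module.End ℝ (W p q) where
  toFun f S := if i ∈ S then 0 else sgn p q i (insert i S) • f (insert i S)
  map_add' f g := by funext S; by_cases h : i ∈ S <;> simp [h, smul_add]
  map_smul' c f := by funext S; by_cases h : i ∈ S <;> simp [h, smul_smul, mul_comm]

/-- `R`, multiplication by `η^{ij} p_i p_j`. -/
def opR (p q : ℕ) : Module.End ℝ (W p q) := ∑ i, eta p q i • (pMul p q i * pMul p q i)

/-- The even Euler operator `ℰ = p_i ∂_{p_i}`. -/
def opE (p q : ℕ) : Module.End ℝ (W p q) := ∑ i, pMul p q i * pD p q i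

/-- The trace operator `T = η_{ij} ∂_{p_i} ∂_{p_j}`. -/
def opT (p q : ℕ) : Module.End ℝ (W p q) := ∑ i, eta p q i • (pD p q i * pD p q i)

/-- The odd Euler operator `Σ = ξ^i ∂_{ξ^i}`. -/
def opS (p q : ℕ) : Module.End ℝ (W p q) := ∑ i, xiMul p q i * xiD p q i

/-- `Q`, multiplication by `ξ^i p_i`. -/
def opQ (p q : ℕ) : Module.End ℝ (W p q) := ∑ i, xiMul p q i * pMul p q i

/-- `Q* = ∂_{ξ^i} ∂_{p_i}`. -/
def opQs (p q : ℕ) : Module.End ℝ (W p q) := ∑ i, xiD p q i * pD p q i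

/-- The Koszul differential `δ = η_{ij} ξ^i ∂_{p_j}`. -/
def opd (p q : ℕ) : Module.End ℝ (W p q) := ∑ i, eta p q i • (xiMul p q i * pD p q i)

/-- The Koszul codifferential `δ* = η^{ij} p_i ∂_{ξ^j}`. -/
def opds (p q : ℕ) : Module.End ℝ (W p q) := ∑ i, eta p q i • (pMul p q i * xiD p q i)

/-- The bihomogeneous component `W_{k,κ}`: polynomial degree `k` in the `p` variables and
exterior degree `κ` in the `ξ` variables. -/
def Wc (p q : ℕ) (k κ : ℕ) : Submodule ℝ (W p q) where
  carrier := { f | (∀ S, f S ∈ homogeneousSubmodule (Fin (p + q)) ℝ k) ∧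
      ∀ S, S.card ≠ κ → f S = 0 }
  add_mem' := fun ha hb => ⟨fun S => add_mem (ha.1 S) (hb.1 S),
    fun S h => by simp [Pi.add_apply, ha.2 S h, hb.2 S h]⟩
  zero_mem' := ⟨fun S => zero_mem _, fun S _ => rfl⟩
  smul_mem' := fun c f hf => ⟨fun S => Submodule.smul_mem _ c (hf.1 S),
    fun S h => by simp [Pi.smul_apply, hf.2 S h]⟩

/-- The component `W_{k,κ}` with integer indices, with the convention that it is the zero
subspace as soon as one of the indices is negative. -/
def WcZ (p q : ℕ) (k κ : ℤ) : Submodule ℝ (W p q) :=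
  if 0 ≤ k ∧ 0 ≤ κ then Wc p q k.toNat κ.toNat else ⊥

/-- The commutator `[A,B] = AB − BA`. -/
def cm {p q : ℕ} (A B : Module.End ℝ (W p q)) : Module.End ℝ (W p q) := A * B - B * A

/-- The anticommutator `{A,B} = AB + BA`. -/
def acm {p q : ℕ} (A B : Module.End ℝ (W p q)) : Module.End ℝ (W p q) := A * B + B * A

/-- `E = ℰ + (n/2)·id`. -/
def opEE (p q : ℕ) : Module.End ℝ (W p q) :=
  opE p q + (((p + q : ℕ) : ℝ) / 2) • (1 : Module.End ℝ (W p q))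

/-- `𝗌 = Σ − (n/2)·id`. -/
def opSS (p q : ℕ) : Module.End ℝ (W p q) :=
  opS p q - (((p + q : ℕ) : ℝ) / 2) • (1 : Module.End ℝ (W p q))

theorem pderiv_comm {σ R : Type*} [CommRing R] (i j : σ) (f : MvPolynomial σ R) :
    pderiv i (pderiv j f) = pderiv j (pderiv i f) := by
  classical
  have : ⁅pderiv i, pderiv j⁆ = (0 : Derivation R (MvPolynomial σ R) (MvPolynomial σ R)) :=
    MvPolynomial.derivation_ext fun k => by
      rw [Derivation.commutator_apply, pderiv_X, pderiv_X]; simp [Pi.single_apply, apply_ite]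
  simpa [Derivation.commutator_apply, sub_eq_zero] using congrArg (· f) this

section Brackets

variable {p q : ℕ} (A B C : Module.End ℝ (W p q))

theorem cm_swap : cm A B = -cm B A := by simp only [cm, neg_sub]

theorem acm_comm : acm A B = acm B A := add_comm _ _

theorem _root_.Commute.cm_eq_zero {A B : Module.End ℝ (W p q)} (h : Commute A B) : cm A B = 0 :=
  sub_eq_zero.2 h.eq

theorem cm_add_left : cm (A + B) C = cm A C + cm B C := by
  simp only [cm, add_mul, mul_add]; abel

theorem cm_sub_left : cm (A - B) C = cm A C - cm B C := by
  simp only [cm, sub_mul, mul_sub]; abel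

theorem cm_zero_right : cm A 0 = 0 := by simp only [cm, mul_zero, zero_mul, sub_zero]

theorem cm_smul_one_left (c : ℝ) : cm (c • 1) B = 0 :=
  (Commute.smul_left (Commute.one_left B) c).cm_eq_zero

theorem cm_mul_right : cm A (B * C) = cm A B * C + B * cm A C := by
  simp only [cm, mul_sub, sub_mul, mul_assoc]; abel

theorem cm_mul_left : cm (A * B) C = A * cm B C + cm A C * B := by
  simp only [cm, mul_sub, sub_mul, mul_assoc]; abel

theorem cm_mul_left_eq_acm : cm (A * B) C = A * acm B C - acm A C * B := by
  simp only [cm, acm, mul_add, add_mul, mul_assoc]; abel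

theorem acm_mul_mul {x u y v : Module.End ℝ (W p q)} (huy : Commute u y) (hxv : Commute x v) :
    acm (x * u) (y * v) = acm x y * (v * u) + x * y * cm u v := by
  rw [acm, acm, cm, huy.mul_mul_mul_comm, hxv.symm.mul_mul_mul_comm, add_mul, mul_sub]
  abel

theorem cm_acm_left : cm (acm A B) C = cm A (acm B C) + cm B (acm A C) := by
  simp only [cm, acm, mul_add, add_mul, mul_assoc]; abel

theorem cm_acm_right : cm C (acm A B) = acm (cm C A) B + acm A (cm C B) := by
  simp only [cm, acm, mul_sub, sub_mul, mul_add, add_mul, mul_assoc]; abel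

theorem acm_smul_left (c : ℝ) : acm (c • A) B = c • acm A B := by
  simp only [acm, smul_mul_assoc, mul_smul_comm, smul_add]

theorem acm_smul_right (c : ℝ) : acm A (c • B) = c • acm A B := by
  simp only [acm, smul_mul_assoc, mul_smul_comm, smul_add]

theorem cm_sum_left {ι : Type*} (s : Finset ι) (X : ι → Module.End ℝ (W p q)) :
    cm (∑ i ∈ s, X i) B = ∑ i ∈ s, cm (X i) B := by
  simp only [cm, Finset.sum_mul, Finset.mul_sum, Finset.sum_sub_distrib]

theorem acm_sum_sum {ι κ : Type*} (s : Finset ι) (t : Finset κ)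
    (X : ι → Module.End ℝ (W p q)) (Y : κ → Module.End ℝ (W p q)) :
    acm (∑ i ∈ s, X i) (∑ j ∈ t, Y j) = ∑ i ∈ s, ∑ j ∈ t, acm (X i) (Y j) := by
  rw [acm, Finset.sum_mul_sum, Finset.sum_mul_sum, Finset.sum_comm (s := t),
    ← Finset.sum_add_distrib]
  exact Finset.sum_congr rfl fun i _ => Finset.sum_add_distrib.symm

theorem mul_self_eq_zero_of_acm_self (h : acm A A = 0) : A * A = 0 :=
  (smul_eq_zero.1 ((two_smul ℝ (A * A)).trans h)).resolve_left two_ne_zero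

end Brackets

section Signs

variable {p q : ℕ} {i j : Fin (p + q)} {S : Finset (Fin (p + q))}

theorem sgn_mul_self (i : Fin (p + q)) (S : Finset (Fin (p + q))) :
    sgn p q i S * sgn p q i S = 1 := by
  rw [sgn, ← pow_add]
  exact Even.neg_one_pow ⟨_, rfl⟩

theorem sgn_insert_of_not_lt (S : Finset (Fin (p + q))) (h : ¬j < i) :
    sgn p q i (insert j S) = sgn p q i S := by
  simp [sgn, Finset.filter_insert, h]

theorem sgn_insert_of_lt (h : j < i) (hj : j ∉ S) :
    sgn p q i (insert j S) = -sgn p q i S := by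
  have hj' : j ∉ S.filter (· < i) := by simp [hj]
  simp [sgn, Finset.filter_insert, h, Finset.card_insert_of_notMem hj', pow_succ]

theorem sgn_erase_of_not_lt (S : Finset (Fin (p + q))) (h : ¬j < i) :
    sgn p q i (S.erase j) = sgn p q i S := by
  have hj : j ∉ S.filter (· < i) := by simp [h]
  simp [sgn, Finset.filter_erase, Finset.erase_eq_of_notMem hj]

theorem sgn_insert_self (i : Fin (p + q)) (S : Finset (Fin (p + q))) :
    sgn p q i (insert i S) = sgn p q i S :=
  sgn_insert_of_not_lt S (lt_irrefl i)

theorem sgn_erase_self (i : Fin (p + q)) (S : Finset (Fin (p + q))) :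
    sgn p q i (S.erase i) = sgn p q i S :=
  sgn_erase_of_not_lt S (lt_irrefl i)

theorem sgn_erase_of_lt (h : j < i) (hj : j ∈ S) :
    sgn p q i (S.erase j) = -sgn p q i S := by
  have hj' : j ∈ S.filter (· < i) := by simp [hj, h]
  rw [sgn, sgn, Finset.filter_erase, ← Finset.card_erase_add_one hj', pow_succ]
  ring

theorem sgn_mul_sgn_erase_antisymm (hij : i ≠ j) (hi : i ∈ S) (hj : j ∈ S) :
    sgn p q i S * sgn p q j (S.erase i) = -(sgn p q j S * sgn p q i (S.erase j)) := by
  rcases hij.lt_or_gt with h | h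
  · rw [sgn_erase_of_lt h hi, sgn_erase_of_not_lt S h.asymm]; ring
  · rw [sgn_erase_of_not_lt S h.asymm, sgn_erase_of_lt h hj]; ring

theorem sgn_mul_sgn_insert_antisymm (hij : i ≠ j) (hi : i ∉ S) (hj : j ∉ S) :
    sgn p q i S * sgn p q j (insert i S) = -(sgn p q j S * sgn p q i (insert j S)) := by
  rcases hij.lt_or_gt with h | h
  · rw [sgn_insert_of_lt h hi, sgn_insert_of_not_lt S h.asymm]; ring
  · rw [sgn_insert_of_not_lt S h.asymm, sgn_insert_of_lt h hj]; ring

theorem sgn_mul_sgn_insert_eq_neg (hij : i ≠ j) (hi : i ∉ S) (hj : j ∈ S) :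
    sgn p q i S * sgn p q j (insert i S) = -(sgn p q j S * sgn p q i (S.erase j)) := by
  rcases hij.lt_or_gt with h | h
  · rw [sgn_insert_of_lt h hi, sgn_erase_of_not_lt S h.asymm]; ring
  · rw [sgn_insert_of_not_lt S h.asymm, sgn_erase_of_lt h hj]; ring

end Signs

section Generators

variable {p q : ℕ}

theorem pMul_apply (i : Fin (p + q)) (f : W p q) (S : Finset (Fin (p + q))) :
    pMul p q i f S = X i * f S := rfl

theorem pD_apply (i : Fin (p + q)) (f : W p q) (S : Finset (Fin (p + q))) :
    pD p q i f S = pderiv i (f S) := rfl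

theorem xiMul_apply (i : Fin (p + q)) (f : W p q) (S : Finset (Fin (p + q))) :
    xiMul p q i f S = if i ∈ S then sgn p q i S • f (S.erase i) else 0 := rfl

theorem xiD_apply (i : Fin (p + q)) (f : W p q) (S : Finset (Fin (p + q))) :
    xiD p q i f S = if i ∈ S then 0 else sgn p q i S • f (insert i S) := by
  rw [← sgn_insert_self]; rfl

theorem pMul_commute (i j : Fin (p + q)) : Commute (pMul p q i) (pMul p q j) :=
  LinearMap.ext fun f => funext fun S => by
    simp only [Module.End.mul_apply, pMul_apply]; ring

theorem pD_commute (i j : Fin (p + q)) : Commute (pD p q i) (pD p q j) :=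
  LinearMap.ext fun f => funext fun S => pderiv_comm i j (f S)

theorem cm_pD_pMul (i j : Fin (p + q)) :
    cm (pD p q i) (pMul p q j) = if i = j then 1 else 0 := by
  refine LinearMap.ext fun f => funext fun S => ?_
  by_cases h : i = j
  · subst h; simp [cm, pMul_apply, pD_apply]
  · simp [cm, pMul_apply, pD_apply, h, pderiv_X_of_ne (Ne.symm h)]

theorem cm_pMul_pD (i j : Fin (p + q)) :
    cm (pMul p q i) (pD p q j) = if i = j then (-1 : ℝ) • 1 else 0 := by
  rw [cm_swap, cm_pD_pMul]
  by_cases h : i = j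
  · subst h; rw [if_pos rfl, if_pos rfl]; exact (neg_one_smul ℝ 1).symm
  · rw [if_neg (Ne.symm h), if_neg h, neg_zero]

theorem pMul_commute_xiMul (i j : Fin (p + q)) : Commute (pMul p q i) (xiMul p q j) :=
  LinearMap.ext fun f => funext fun S => by
    by_cases h : j ∈ S <;> simp [pMul_apply, xiMul_apply, h]

theorem pMul_commute_xiD (i j : Fin (p + q)) : Commute (pMul p q i) (xiD p q j) :=
  LinearMap.ext fun f => funext fun S => by
    by_cases h : j ∈ S <;> simp [pMul_apply, xiD_apply, h]

theorem pD_commute_xiMul (i j : Fin (p + q)) : Commute (pD p q i) (xiMul p q j) :=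
  LinearMap.ext fun f => funext fun S => by
    by_cases h : j ∈ S <;> simp [pD_apply, xiMul_apply, h]

theorem pD_commute_xiD (i j : Fin (p + q)) : Commute (pD p q i) (xiD p q j) :=
  LinearMap.ext fun f => funext fun S => by
    by_cases h : j ∈ S <;> simp [pD_apply, xiD_apply, h]

theorem acm_xiMul_xiMul (i j : Fin (p + q)) : acm (xiMul p q i) (xiMul p q j) = 0 := by
  refine LinearMap.ext fun f => funext fun S => ?_
  by_cases hij : i = j
  · subst hij; by_cases hi : i ∈ S <;> simp [acm, xiMul_apply, hi]
  by_cases hi : i ∈ S <;> by_cases hj : j ∈ S <;>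
    simp [acm, xiMul_apply, hi, hj, hij, Ne.symm hij, smul_smul, Finset.erase_right_comm,
      sgn_mul_sgn_erase_antisymm hij]

theorem acm_xiD_xiD (i j : Fin (p + q)) : acm (xiD p q i) (xiD p q j) = 0 := by
  refine LinearMap.ext fun f => funext fun S => ?_
  by_cases hij : i = j
  · subst hij; by_cases hi : i ∈ S <;> simp [acm, xiD_apply, hi]
  by_cases hi : i ∈ S <;> by_cases hj : j ∈ S <;>
    simp [acm, xiD_apply, hi, hj, hij, Ne.symm hij, smul_smul, sgn_mul_sgn_insert_antisymm hij,
      Finset.insert_comm j i]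

theorem acm_xiD_xiMul (i j : Fin (p + q)) :
    acm (xiD p q i) (xiMul p q j) = if i = j then 1 else 0 := by
  refine LinearMap.ext fun f => funext fun S => ?_
  by_cases hij : i = j
  · subst hij
    by_cases hi : i ∈ S <;>
      simp [acm, xiD_apply, xiMul_apply, hi, smul_smul, sgn_mul_self, sgn_insert_self,
        sgn_erase_self]
  by_cases hi : i ∈ S <;> by_cases hj : j ∈ S <;>
    simp [acm, xiD_apply, xiMul_apply, hi, hj, hij, Ne.symm hij, smul_smul,
      Finset.erase_insert_of_ne hij, sgn_mul_sgn_insert_eq_neg hij]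

theorem acm_xiMul_xiD (i j : Fin (p + q)) :
    acm (xiMul p q i) (xiD p q j) = if i = j then 1 else 0 := by
  rw [acm_comm, acm_xiD_xiMul]
  exact if_congr eq_comm rfl rfl

end Generators

section Bidegree

open Module.End LinearMap

variable {p q : ℕ}

def bihomogeneous (p q : ℕ) (a b : ℝ) : Submodule ℝ (Module.End ℝ (W p q)) :=
  eigenspace (mulLeft ℝ (opE p q) - mulRight ℝ (opE p q)) a ⊓
    eigenspace (mulLeft ℝ (opS p q) - mulRight ℝ (opS p q)) b

theorem mem_bihomogeneous_iff {X : Module.End ℝ (W p q)} {a b : ℝ} :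
    X ∈ bihomogeneous p q a b ↔ cm (opE p q) X = a • X ∧ cm (opS p q) X = b • X := by
  simp only [bihomogeneous, Submodule.mem_inf, mem_eigenspace_iff]; rfl

theorem mul_mem_bihomogeneous {X Y : Module.End ℝ (W p q)} {a b c d : ℝ}
    (hX : X ∈ bihomogeneous p q a b) (hY : Y ∈ bihomogeneous p q c d) :
    X * Y ∈ bihomogeneous p q (a + c) (b + d) := by
  rw [mem_bihomogeneous_iff] at *
  simp only [cm_mul_right, hX, hY, smul_mul_assoc, mul_smul_comm, add_smul, and_self]

theorem pMul_mem_bihomogeneous (j : Fin (p + q)) : pMul p q j ∈ bihomogeneous p q 1 0 := by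
  simp [mem_bihomogeneous_iff, opE, opS, cm_sum_left, cm_mul_left, cm_pD_pMul,
    (pMul_commute _ _).cm_eq_zero, (pMul_commute_xiMul _ _).symm.cm_eq_zero,
    (pMul_commute_xiD _ _).symm.cm_eq_zero]

theorem pD_mem_bihomogeneous (j : Fin (p + q)) : pD p q j ∈ bihomogeneous p q (-1) 0 := by
  refine mem_bihomogeneous_iff.2 ⟨.trans ?_ (neg_one_smul ℝ (pD p q j)).symm, ?_⟩
  · simp [opE, cm_sum_left, cm_mul_left, cm_pMul_pD, ite_mul, (pD_commute _ _).cm_eq_zero]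
  · simp [opS, cm_sum_left, cm_mul_left, (pD_commute_xiMul _ _).symm.cm_eq_zero,
      (pD_commute_xiD _ _).symm.cm_eq_zero]

theorem xiMul_mem_bihomogeneous (j : Fin (p + q)) : xiMul p q j ∈ bihomogeneous p q 0 1 := by
  refine mem_bihomogeneous_iff.2 ⟨?_, ?_⟩
  · simp [opE, cm_sum_left, cm_mul_left, (pMul_commute_xiMul _ _).cm_eq_zero,
      (pD_commute_xiMul _ _).cm_eq_zero]
  · simp [opS, cm_sum_left, cm_mul_left_eq_acm, acm_xiD_xiMul, acm_xiMul_xiMul]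

theorem xiD_mem_bihomogeneous (j : Fin (p + q)) : xiD p q j ∈ bihomogeneous p q 0 (-1) := by
  refine mem_bihomogeneous_iff.2 ⟨?_, .trans ?_ (neg_one_smul ℝ (xiD p q j)).symm⟩
  · simp [opE, cm_sum_left, cm_mul_left, (pMul_commute_xiD _ _).cm_eq_zero,
      (pD_commute_xiD _ _).cm_eq_zero]
  · simp [opS, cm_sum_left, cm_mul_left_eq_acm, acm_xiMul_xiD, acm_xiD_xiD]

theorem opR_mem_bihomogeneous : opR p q ∈ bihomogeneous p q 2 0 :=
  Submodule.sum_mem _ fun i _ => Submodule.smul_mem _ _ <| by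
    convert mul_mem_bihomogeneous (pMul_mem_bihomogeneous i) (pMul_mem_bihomogeneous i) using 1
    norm_num

theorem opT_mem_bihomogeneous : opT p q ∈ bihomogeneous p q (-2) 0 :=
  Submodule.sum_mem _ fun i _ => Submodule.smul_mem _ _ <| by
    convert mul_mem_bihomogeneous (pD_mem_bihomogeneous i) (pD_mem_bihomogeneous i) using 1
    norm_num

theorem opE_mem_bihomogeneous : opE p q ∈ bihomogeneous p q 0 0 :=
  Submodule.sum_mem _ fun i _ => by
    simpa using mul_mem_bihomogeneous (pMul_mem_bihomogeneous i) (pD_mem_bihomogeneous i)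

theorem opd_mem_bihomogeneous : opd p q ∈ bihomogeneous p q (-1) 1 :=
  Submodule.sum_mem _ fun i _ => Submodule.smul_mem _ _ <| by
    simpa using mul_mem_bihomogeneous (xiMul_mem_bihomogeneous i) (pD_mem_bihomogeneous i)

theorem opds_mem_bihomogeneous : opds p q ∈ bihomogeneous p q 1 (-1) :=
  Submodule.sum_mem _ fun i _ => Submodule.smul_mem _ _ <| by
    simpa using mul_mem_bihomogeneous (pMul_mem_bihomogeneous i) (xiD_mem_bihomogeneous i)

theorem opQ_mem_bihomogeneous : opQ p q ∈ bihomogeneous p q 1 1 :=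
  Submodule.sum_mem _ fun i _ => by
    simpa using mul_mem_bihomogeneous (xiMul_mem_bihomogeneous i) (pMul_mem_bihomogeneous i)

theorem opQs_mem_bihomogeneous : opQs p q ∈ bihomogeneous p q (-1) (-1) :=
  Submodule.sum_mem _ fun i _ => by
    simpa using mul_mem_bihomogeneous (xiD_mem_bihomogeneous i) (pD_mem_bihomogeneous i)

end Bidegree

section Anticommutators

variable (p q : ℕ)

theorem eta_mul_self (i : Fin (p + q)) : eta p q i * eta p q i = 1 := by
  unfold eta; split_ifs <;> norm_num

theorem opds_eq_sum_xiD_mul : opds p q = ∑ i, eta p q i • (xiD p q i * pMul p q i) := by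
  simp only [opds, (pMul_commute_xiD _ _).eq]

theorem xiMul_mul_self (i : Fin (p + q)) : xiMul p q i * xiMul p q i = 0 :=
  mul_self_eq_zero_of_acm_self _ (acm_xiMul_xiMul i i)

theorem xiD_mul_self (i : Fin (p + q)) : xiD p q i * xiD p q i = 0 :=
  mul_self_eq_zero_of_acm_self _ (acm_xiD_xiD i i)

theorem pD_mul_pMul_self (i : Fin (p + q)) : pD p q i * pMul p q i = pMul p q i * pD p q i + 1 := by
  simpa [cm, sub_eq_iff_eq_add'] using cm_pD_pMul i i

theorem acm_opd_opds : acm (opd p q) (opds p q) = opEE p q + opSS p q :=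
  calc acm (opd p q) (opds p q) = ∑ i, (pMul p q i * pD p q i + xiMul p q i * xiD p q i) := by
        rw [opd, opds_eq_sum_xiD_mul, acm_sum_sum]
        simp [acm_smul_left, acm_smul_right,
          acm_mul_mul (pD_commute_xiD _ _) (pMul_commute_xiMul _ _).symm, acm_xiMul_xiD,
          cm_pD_pMul, ite_mul, mul_ite, smul_ite, ite_add_ite, smul_smul, eta_mul_self]
    _ = opEE p q + opSS p q := by
        rw [Finset.sum_add_distrib, opEE, opSS, opE, opS]
        abel

theorem acm_opQ_opQs : acm (opQ p q) (opQs p q) = opEE p q - opSS p q :=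
  calc acm (opQ p q) (opQs p q) = ∑ i, (pD p q i * pMul p q i - xiMul p q i * xiD p q i) := by
        rw [opQ, opQs, acm_sum_sum]
        simp [acm_mul_mul (pMul_commute_xiD _ _) (pD_commute_xiMul _ _).symm, acm_xiMul_xiD,
          cm_pMul_pD, ite_mul, mul_ite, ite_add_ite, sub_eq_add_neg]
    _ = opEE p q - opSS p q := by
        have hn : ((p + q : ℕ) : ℝ) • (1 : Module.End ℝ (W p q)) =
            ∑ _i : Fin (p + q), 1 := by
          rw [Finset.sum_const, Finset.card_univ, Fintype.card_fin, Nat.cast_smul_eq_nsmul]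
        simp only [pD_mul_pMul_self, Finset.sum_sub_distrib, Finset.sum_add_distrib, opEE, opSS,
          opE, opS, ← hn]
        module

theorem acm_opd_opQs : acm (opd p q) (opQs p q) = opT p q := by
  rw [opd, opQs, acm_sum_sum]
  simp [acm_smul_left, acm_mul_mul (pD_commute_xiD _ _) (pD_commute_xiMul _ _).symm,
    acm_xiMul_xiD, (pD_commute _ _).cm_eq_zero, ite_mul, smul_ite, opT]

theorem acm_opds_opQ : acm (opds p q) (opQ p q) = opR p q := by
  rw [opds_eq_sum_xiD_mul, opQ, acm_sum_sum]
  simp [acm_smul_left, acm_mul_mul (pMul_commute_xiMul _ _) (pMul_commute_xiD _ _).symm,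
    acm_xiD_xiMul, (pMul_commute _ _).cm_eq_zero, ite_mul, smul_ite, opR]

theorem acm_opd_opQ : acm (opd p q) (opQ p q) = 0 := by
  rw [opd, opQ, acm_sum_sum]
  simp [acm_smul_left, acm_mul_mul (pD_commute_xiMul _ _) (pMul_commute_xiMul _ _).symm,
    acm_xiMul_xiMul, cm_pD_pMul, mul_ite, xiMul_mul_self]

theorem acm_opds_opQs : acm (opds p q) (opQs p q) = 0 := by
  rw [opds_eq_sum_xiD_mul, opQs, acm_sum_sum]
  simp [acm_smul_left, acm_mul_mul (pMul_commute_xiD _ _) (pD_commute_xiD _ _).symm,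
    acm_xiD_xiD, cm_pMul_pD, mul_ite, xiD_mul_self]

theorem acm_opd_self : acm (opd p q) (opd p q) = 0 := by
  rw [opd, acm_sum_sum]
  simp [acm_smul_left, acm_smul_right,
    acm_mul_mul (pD_commute_xiMul _ _) (pD_commute_xiMul _ _).symm,
    acm_xiMul_xiMul, (pD_commute _ _).cm_eq_zero]

theorem acm_opds_self : acm (opds p q) (opds p q) = 0 := by
  rw [opds_eq_sum_xiD_mul, acm_sum_sum]
  simp [acm_smul_left, acm_smul_right,
    acm_mul_mul (pMul_commute_xiD _ _) (pMul_commute_xiD _ _).symm,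
    acm_xiD_xiD, (pMul_commute _ _).cm_eq_zero]

theorem acm_opQ_self : acm (opQ p q) (opQ p q) = 0 := by
  rw [opQ, acm_sum_sum]
  simp [acm_mul_mul (pMul_commute_xiMul _ _) (pMul_commute_xiMul _ _).symm,
    acm_xiMul_xiMul, (pMul_commute _ _).cm_eq_zero]

theorem acm_opQs_self : acm (opQs p q) (opQs p q) = 0 := by
  rw [opQs, acm_sum_sum]
  simp [acm_mul_mul (pD_commute_xiD _ _) (pD_commute_xiD _ _).symm,
    acm_xiD_xiD, (pD_commute _ _).cm_eq_zero]

end Anticommutators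

section Relations

variable (p q : ℕ)

theorem cm_opEE_left (X : Module.End ℝ (W p q)) : cm (opEE p q) X = cm (opE p q) X := by
  rw [opEE, cm_add_left, cm_smul_one_left, add_zero]

theorem cm_opSS_left (X : Module.End ℝ (W p q)) : cm (opSS p q) X = cm (opS p q) X := by
  rw [opSS, cm_sub_left, cm_smul_one_left, sub_zero]

variable {p q}

theorem cm_opEE_of_mem {X : Module.End ℝ (W p q)} {a b : ℝ} (h : X ∈ bihomogeneous p q a b) :
    cm (opEE p q) X = a • X :=
  (cm_opEE_left p q X).trans (mem_bihomogeneous_iff.1 h).1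

theorem cm_opSS_of_mem {X : Module.End ℝ (W p q)} {a b : ℝ} (h : X ∈ bihomogeneous p q a b) :
    cm (opSS p q) X = b • X :=
  (cm_opSS_left p q X).trans (mem_bihomogeneous_iff.1 h).2

variable (p q)

theorem cm_opSS_opEE : cm (opSS p q) (opEE p q) = 0 := by
  rw [cm_swap, cm_opEE_left, cm_swap, cm_opSS_of_mem opE_mem_bihomogeneous, zero_smul, neg_zero,
    neg_zero]

theorem cm_opR_opd : cm (opR p q) (opd p q) = (-2 : ℝ) • opQ p q := by
  rw [← acm_opds_opQ, cm_acm_left, acm_comm (opQ p q), acm_opd_opQ, acm_comm (opds p q),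
    acm_opd_opds, cm_zero_right, zero_add, cm_swap, cm_add_left,
    cm_opEE_of_mem opQ_mem_bihomogeneous, cm_opSS_of_mem opQ_mem_bihomogeneous]
  module

theorem cm_opR_opQs : cm (opR p q) (opQs p q) = (-2 : ℝ) • opds p q := by
  rw [← acm_opds_opQ, cm_acm_left, acm_opQ_opQs, acm_opds_opQs, cm_zero_right, add_zero,
    cm_swap, cm_sub_left, cm_opEE_of_mem opds_mem_bihomogeneous,
    cm_opSS_of_mem opds_mem_bihomogeneous]
  module

theorem cm_opT_opds : cm (opT p q) (opds p q) = (2 : ℝ) • opQs p q := by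
  rw [← acm_opd_opQs, cm_acm_left, acm_comm (opQs p q), acm_opds_opQs, acm_opd_opds,
    cm_zero_right, zero_add, cm_swap, cm_add_left, cm_opEE_of_mem opQs_mem_bihomogeneous,
    cm_opSS_of_mem opQs_mem_bihomogeneous]
  module

theorem cm_opT_opQ : cm (opT p q) (opQ p q) = (2 : ℝ) • opd p q := by
  rw [← acm_opd_opQs, cm_acm_left, acm_comm (opQs p q), acm_opQ_opQs, acm_opd_opQ,
    cm_zero_right, add_zero, cm_swap, cm_sub_left, cm_opEE_of_mem opd_mem_bihomogeneous,
    cm_opSS_of_mem opd_mem_bihomogeneous]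
  module

theorem cm_opT_opR : cm (opT p q) (opR p q) = (4 : ℝ) • opEE p q := by
  rw [← acm_opds_opQ, cm_acm_right, cm_opT_opds, cm_opT_opQ, acm_smul_left, acm_smul_right,
    acm_comm (opQs p q), acm_opQ_opQs, acm_comm (opds p q), acm_opd_opds]
  module

theorem commute_opR_opQ : Commute (opR p q) (opQ p q) :=
  Commute.sum_left _ _ _ fun i _ => Commute.smul_left (Commute.sum_right _ _ _ fun j _ =>
    have h := (pMul_commute_xiMul i j).mul_right (pMul_commute i j)
    h.mul_left h) _

theorem commute_opR_opds : Commute (opR p q) (opds p q) :=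
  Commute.sum_left _ _ _ fun i _ => Commute.smul_left (Commute.sum_right _ _ _ fun j _ =>
    have h := (pMul_commute i j).mul_right (pMul_commute_xiD i j)
    (h.mul_left h).smul_right _) _

theorem commute_opT_opd : Commute (opT p q) (opd p q) :=
  Commute.sum_left _ _ _ fun i _ => Commute.smul_left (Commute.sum_right _ _ _ fun j _ =>
    have h := (pD_commute_xiMul i j).mul_right (pD_commute i j)
    (h.mul_left h).smul_right _) _

theorem commute_opT_opQs : Commute (opT p q) (opQs p q) :=
  Commute.sum_left _ _ _ fun i _ => Commute.smul_left (Commute.sum_right _ _ _ fun j _ =>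
    have h := (pD_commute_xiD i j).mul_right (pD_commute i j)
    h.mul_left h) _

end Relations

theorem statement4_general (p q : ℕ) :
    cm (opEE p q) (opR p q) = (2:ℝ) • opR p q ∧
    cm (opEE p q) (opT p q) = (-2:ℝ) • opT p q ∧
    cm (opT p q) (opR p q) = (4:ℝ) • opEE p q ∧
    cm (opSS p q) (opR p q) = 0 ∧
    cm (opSS p q) (opEE p q) = 0 ∧
    cm (opSS p q) (opT p q) = 0 ∧
    cm (opR p q) (opd p q) = (-2:ℝ) • opQ p q ∧
    cm (opR p q) (opQs p q) = (-2:ℝ) • opds p q ∧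
    cm (opR p q) (opQ p q) = 0 ∧
    cm (opR p q) (opds p q) = 0 ∧
    cm (opT p q) (opds p q) = (2:ℝ) • opQs p q ∧
    cm (opT p q) (opQ p q) = (2:ℝ) • opd p q ∧
    cm (opT p q) (opd p q) = 0 ∧
    cm (opT p q) (opQs p q) = 0 ∧
    cm (opEE p q) (opd p q) = - opd p q ∧
    cm (opEE p q) (opds p q) = opds p q ∧
    cm (opEE p q) (opQ p q) = opQ p q ∧
    cm (opEE p q) (opQs p q) = - opQs p q ∧
    cm (opSS p q) (opd p q) = opd p q ∧
    cm (opSS p q) (opds p q) = - opds p q ∧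
    cm (opSS p q) (opQ p q) = opQ p q ∧
    cm (opSS p q) (opQs p q) = - opQs p q ∧
    opd p q * opd p q = 0 ∧
    opds p q * opds p q = 0 ∧
    opQ p q * opQ p q = 0 ∧
    opQs p q * opQs p q = 0 ∧
    acm (opd p q) (opds p q) = opEE p q + opSS p q ∧
    acm (opQ p q) (opQs p q) = opEE p q - opSS p q ∧
    acm (opd p q) (opQs p q) = opT p q ∧
    acm (opds p q) (opQ p q) = opR p q ∧
    acm (opd p q) (opQ p q) = 0 ∧
    acm (opds p q) (opQs p q) = 0 := by
  have hd := opd_mem_bihomogeneous (p := p) (q := q)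
  have hds := opds_mem_bihomogeneous (p := p) (q := q)
  have hQ := opQ_mem_bihomogeneous (p := p) (q := q)
  have hQs := opQs_mem_bihomogeneous (p := p) (q := q)
  exact ⟨cm_opEE_of_mem opR_mem_bihomogeneous, cm_opEE_of_mem opT_mem_bihomogeneous,
    cm_opT_opR p q, (cm_opSS_of_mem opR_mem_bihomogeneous).trans (zero_smul ℝ _),
    cm_opSS_opEE p q, (cm_opSS_of_mem opT_mem_bihomogeneous).trans (zero_smul ℝ _),
    cm_opR_opd p q, cm_opR_opQs p q, (commute_opR_opQ p q).cm_eq_zero,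
    (commute_opR_opds p q).cm_eq_zero, cm_opT_opds p q, cm_opT_opQ p q,
    (commute_opT_opd p q).cm_eq_zero, (commute_opT_opQs p q).cm_eq_zero,
    (cm_opEE_of_mem hd).trans (neg_one_smul ℝ (opd p q)),
    (cm_opEE_of_mem hds).trans (one_smul ℝ (opds p q)),
    (cm_opEE_of_mem hQ).trans (one_smul ℝ (opQ p q)),
    (cm_opEE_of_mem hQs).trans (neg_one_smul ℝ (opQs p q)),
    (cm_opSS_of_mem hd).trans (one_smul ℝ (opd p q)),
    (cm_opSS_of_mem hds).trans (neg_one_smul ℝ (opds p q)),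
    (cm_opSS_of_mem hQ).trans (one_smul ℝ (opQ p q)),
    (cm_opSS_of_mem hQs).trans (neg_one_smul ℝ (opQs p q)),
    mul_self_eq_zero_of_acm_self _ (acm_opd_self p q),
    mul_self_eq_zero_of_acm_self _ (acm_opds_self p q),
    mul_self_eq_zero_of_acm_self _ (acm_opQ_self p q),
    mul_self_eq_zero_of_acm_self _ (acm_opQs_self p q),
    acm_opd_opds p q, acm_opQ_opQs p q, acm_opd_opQs p q, acm_opds_opQ p q, acm_opd_opQ p q,
    acm_opds_opQs p q⟩

/-- The defining relations of the orthosymplectic Lie superalgebra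
`spo(2|1,1)` realized by the eight fiberwise operators `R, E, T, 𝗌, Q, δ, δ*, Q*` on `W`. -/
theorem statement4 (p q : ℕ) (hn : 1 ≤ p + q) :
    cm (opEE p q) (opR p q) = (2:ℝ) • opR p q ∧
    cm (opEE p q) (opT p q) = (-2:ℝ) • opT p q ∧
    cm (opT p q) (opR p q) = (4:ℝ) • opEE p q ∧
    cm (opSS p q) (opR p q) = 0 ∧
    cm (opSS p q) (opEE p q) = 0 ∧
    cm (opSS p q) (opT p q) = 0 ∧
    cm (opR p q) (opd p q) = (-2:ℝ) • opQ p q ∧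
    cm (opR p q) (opQs p q) = (-2:ℝ) • opds p q ∧
    cm (opR p q) (opQ p q) = 0 ∧
    cm (opR p q) (opds p q) = 0 ∧
    cm (opT p q) (opds p q) = (2:ℝ) • opQs p q ∧
    cm (opT p q) (opQ p q) = (2:ℝ) • opd p q ∧
    cm (opT p q) (opd p q) = 0 ∧
    cm (opT p q) (opQs p q) = 0 ∧
    cm (opEE p q) (opd p q) = - opd p q ∧
    cm (opEE p q) (opds p q) = opds p q ∧
    cm (opEE p q) (opQ p q) = opQ p q ∧
    cm (opEE p q) (opQs p q) = - opQs p q ∧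
    cm (opSS p q) (opd p q) = opd p q ∧
    cm (opSS p q) (opds p q) = - opds p q ∧
    cm (opSS p q) (opQ p q) = opQ p q ∧
    cm (opSS p q) (opQs p q) = - opQs p q ∧
    opd p q * opd p q = 0 ∧
    opds p q * opds p q = 0 ∧
    opQ p q * opQ p q = 0 ∧
    opQs p q * opQs p q = 0 ∧
    acm (opd p q) (opds p q) = opEE p q + opSS p q ∧
    acm (opQ p q) (opQs p q) = opEE p q - opSS p q ∧
    acm (opd p q) (opQs p q) = opT p q ∧
    acm (opds p q) (opQ p q) = opR p q ∧
    acm (opd p q) (opQ p q) = 0 ∧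
    acm (opds p q) (opQs p q) = 0 :=
  statement4_general p q
end

end SpinQuant
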